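/- MacMahon's box formula for r = 2: the generating function for plane partitions with at most 2 rows, at most s columns, and all parts at most t is ∏_{j=1}^{s} (1-x^{j+t})(1-x^{j+t+1}) / ((1-x^{j})(1-x^{j+1})). -/

import Mathlib

/-!
The two rows `μ ≤ λ` of a plane partition in `B(2,s,t)` are partitions in the `s × t` box, whose
generating function is the Gaussian binomial `B(s,t)`; the `q`-Pascal recurrence gives
`B(s,t) (q;q)_s = (q^{t+1};q)_s`. For a pair `(λ, μ)` of such partitions with `μ ≰ λ`, cut both
at the first column `k` with `λ_k < μ_k` and exchange the tails, shifted by one column and by one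
in height (the two-path case of Lindström–Gessel–Viennot). This is a bijection onto pairs of
partitions in the boxes `(s+1) × (t-1)` and `(s-1) × (t+1)` lowering the total size by one, so
the two-row generating function is the determinant `B(s,t)² - q B(s+1,t-1) B(s-1,t+1)`, and
MacMahon's product follows from an identity between `q`-Pochhammer products.
-/

open PowerSeries

/-- Number of plane partitions of `k` fitting in the box `B(2,s,t)`:
`2 × s` arrays of nonnegative integers `≤ t`, weakly decreasing along rows
and columns, with total sum `k`. -/
noncomputable def boxedPlanePartitionCount (s t k : ℕ) : ℕ :=
  Nat.card {f : Fin 2 → Fin s → ℕ //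
    (∀ i : Fin 2, ∀ j j' : Fin s, j ≤ j' → f i j' ≤ f i j) ∧
    (∀ j : Fin s, f 1 j ≤ f 0 j) ∧
    (∀ i j, f i j ≤ t) ∧
    ∑ i, ∑ j, f i j = k}

open Finset

noncomputable section

lemma IsLeast.not_of_lt {α : Type*} [Preorder α] {p : α → Prop} {k i : α}
    (hk : IsLeast {i | p i} k) (hi : i < k) : ¬p i :=
  fun h => (hk.2 h).not_gt hi

lemma sum_sub_one_add_card {ι : Type*} {S : Finset ι} {f : ι → ℕ} (h : ∀ i ∈ S, 1 ≤ f i) :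
    ∑ i ∈ S, (f i - 1) + #S = ∑ i ∈ S, f i := by
  rw [card_eq_sum_ones, ← sum_add_distrib]
  exact sum_congr rfl fun i hi => Nat.sub_add_cancel (h i hi)

-- Partitions live on all of `ℕ` rather than on `Fin s`, so that moving a tail by one column
-- is a shift of the index.
def IsBox (s t : ℕ) (f : ℕ → ℕ) : Prop :=
  Antitone f ∧ (∀ j, f j ≤ t) ∧ ∀ j, s ≤ j → f j = 0

def extendByZero {s : ℕ} (g : Fin s → ℕ) (j : ℕ) : ℕ :=
  if h : j < s then g ⟨j, h⟩ else 0

def splice (k : ℕ) (f g : ℕ → ℕ) (i : ℕ) : ℕ :=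
  if i < k then f i else g i

section Box

variable {k s t : ℕ} {f g : ℕ → ℕ}

lemma extendByZero_val (g : Fin s → ℕ) (j : Fin s) : extendByZero g j = g j := by
  simp [extendByZero]

lemma extendByZero_restrict (hf : ∀ j, s ≤ j → f j = 0) :
    extendByZero (fun j : Fin s => f j) = f := by
  funext j
  by_cases hj : j < s
  · simp [extendByZero, hj]
  · simp [extendByZero, hj, hf j (not_lt.mp hj)]

lemma extendByZero_mono {g h : Fin s → ℕ} (hgh : g ≤ h) : extendByZero g ≤ extendByZero h :=
  fun j => by unfold extendByZero; split_ifs; exacts [hgh _, le_rfl]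

lemma sum_range_extendByZero (g : Fin s → ℕ) : ∑ j ∈ range s, extendByZero g j = ∑ j, g j := by
  rw [← Fin.sum_univ_eq_sum_range]
  simp [extendByZero_val]

lemma isBox_extendByZero {g : Fin s → ℕ} (hg : Antitone g) (hgt : ∀ j, g j ≤ t) :
    IsBox s t (extendByZero g) := by
  refine ⟨fun i j hij => ?_, fun j => ?_, fun j hj => dif_neg (not_lt.mpr hj)⟩
  · by_cases hj : j < s
    · simpa [extendByZero, hj, lt_of_le_of_lt hij hj] using
        hg (show (⟨i, _⟩ : Fin s) ≤ ⟨j, hj⟩ from hij)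
    · simp [extendByZero, hj]
  · unfold extendByZero
    split_ifs
    exacts [hgt _, Nat.zero_le t]

lemma isBox_sub_one (hf : IsBox s (t + 1) f) : IsBox s t (f · - 1) :=
  ⟨fun _ _ h => Nat.sub_le_sub_right (hf.1 h) 1, fun j => Nat.sub_le_of_le_add (hf.2.1 j),
    fun j hj => by simp [hf.2.2 j hj]⟩

lemma isBox_splice (hf : Antitone f) (hg : Antitone g) (hfg : ∀ i < k, g k ≤ f i)
    (hft : ∀ i < k, f i ≤ t) (hgt : ∀ i, k ≤ i → g i ≤ t) (hks : k ≤ s)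
    (hgs : ∀ i, s ≤ i → g i = 0) : IsBox s t (splice k f g) := by
  refine ⟨fun i j hij => ?_, fun i => ?_, fun i hi => ?_⟩
  · unfold splice
    split_ifs with hj hi hi
    · exact hf hij
    · omega
    · exact (hg (not_lt.mp hj)).trans (hfg i hi)
    · exact hg hij
  · unfold splice
    split_ifs with hi
    exacts [hft i hi, hgt i (not_lt.mp hi)]
  · rw [splice, if_neg (by omega)]
    exact hgs i hi

lemma sum_range_splice {n : ℕ} (hk : k ≤ n) :
    ∑ i ∈ range n, splice k f g i = ∑ i ∈ range k, f i + ∑ i ∈ Ico k n, g i := by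
  rw [← sum_range_add_sum_Ico _ hk]
  congr 1 <;> refine sum_congr rfl fun i hi => ?_
  · rw [splice, if_pos (mem_range.mp hi)]
  · rw [splice, if_neg (not_lt.mpr (mem_Ico.mp hi).1)]

end Box

open Classical in
def boxPartitions (s t : ℕ) : Finset (ℕ → ℕ) :=
  ((univ : Finset (Fin s → Fin (t + 1))).image fun g => extendByZero fun j => (g j : ℕ)).filter
    (IsBox s t)

lemma mem_boxPartitions {s t : ℕ} {f : ℕ → ℕ} : f ∈ boxPartitions s t ↔ IsBox s t f := by
  classical
  refine ⟨fun h => (mem_filter.mp h).2, fun h => mem_filter.mpr ⟨mem_image.mpr ?_, h⟩⟩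
  exact ⟨fun j => ⟨f j, Nat.lt_succ_of_le (h.2.1 j)⟩, mem_univ _, extendByZero_restrict h.2.2⟩

lemma boxPartitions_eq_zero_of_zero {s t : ℕ} (h : s = 0 ∨ t = 0) : boxPartitions s t = {0} := by
  ext f
  rw [mem_boxPartitions, mem_singleton]
  constructor
  · rintro ⟨-, hft, hfs⟩
    funext j
    rcases h with rfl | rfl
    exacts [hfs j (Nat.zero_le j), Nat.le_zero.mp (hft j)]
  · rintro rfl
    exact ⟨antitone_const, fun _ => Nat.zero_le t, fun _ _ => rfl⟩

lemma filter_boxPartitions_succ_eq_zero (s t : ℕ) [DecidablePred fun f : ℕ → ℕ => f s = 0] :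
    (boxPartitions (s + 1) t).filter (fun f => f s = 0) = boxPartitions s t := by
  ext f
  simp only [mem_filter, mem_boxPartitions]
  exact ⟨fun ⟨hf, h⟩ => ⟨hf.1, hf.2.1, fun _ hj => Nat.le_zero.mp (h ▸ hf.1 hj)⟩,
    fun hf => ⟨⟨hf.1, hf.2.1, fun j hj => hf.2.2 j (by omega)⟩, hf.2.2 s le_rfl⟩⟩

section BoxSeries

variable (R : Type*) [CommSemiring R]

def boxSeries (s t : ℕ) : R⟦X⟧ :=
  ∑ f ∈ boxPartitions s t, X ^ (∑ j ∈ range s, f j)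

lemma boxSeries_eq_one_of_zero {s t : ℕ} (h : s = 0 ∨ t = 0) : boxSeries R s t = 1 := by
  simp [boxSeries, boxPartitions_eq_zero_of_zero h]

lemma sum_filter_boxPartitions_succ_ne_zero (s t : ℕ) [DecidablePred fun f : ℕ → ℕ => f s = 0] :
    ∑ f ∈ (boxPartitions (s + 1) (t + 1)).filter (fun f => ¬f s = 0),
      (X : R⟦X⟧) ^ (∑ j ∈ range (s + 1), f j) = X ^ (s + 1) * boxSeries R (s + 1) t := by
  rw [boxSeries, mul_sum]
  refine sum_nbij' (fun f j => f j - 1) (fun g => splice (s + 1) (g · + 1) 0) ?_ ?_ ?_ ?_ ?_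
  · intro f hf
    simp only [mem_filter, mem_boxPartitions] at hf ⊢
    exact isBox_sub_one hf.1
  · intro g hg
    simp only [mem_filter, mem_boxPartitions] at hg ⊢
    refine ⟨isBox_splice (fun i j h => by simpa using hg.1 h) antitone_const
      (fun _ _ => Nat.zero_le _) (fun i _ => by simpa using hg.2.1 i) (fun _ _ => Nat.zero_le _)
      le_rfl fun _ _ => rfl, by simp [splice]⟩
  · intro f hf
    simp only [mem_filter, mem_boxPartitions] at hf
    funext j
    by_cases hj : j < s + 1
    · have := hf.1.1 (Nat.lt_succ_iff.mp hj)
      simp only [splice, if_pos hj]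
      omega
    · simp [splice, hj, hf.1.2.2 j (by omega)]
  · intro g hg
    rw [mem_boxPartitions] at hg
    funext j
    by_cases hj : j < s + 1
    · simp [splice, hj]
    · simp [splice, hj, hg.2.2 j (by omega)]
  · intro f hf
    simp only [mem_filter, mem_boxPartitions] at hf
    have hpos : ∀ j ∈ range (s + 1), 1 ≤ f j := fun j hj => Nat.one_le_iff_ne_zero.mpr
      fun h => hf.2 (Nat.le_zero.mp (h ▸ hf.1.1 (mem_range_succ_iff.mp hj)))
    rw [← pow_add, ← sum_sub_one_add_card hpos, card_range, add_comm]

lemma boxSeries_succ_succ (s t : ℕ) :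
    boxSeries R (s + 1) (t + 1) = boxSeries R s (t + 1) + X ^ (s + 1) * boxSeries R (s + 1) t := by
  classical
  rw [boxSeries, ← sum_filter_add_sum_filter_not _ (fun f => f s = 0),
    sum_filter_boxPartitions_succ_ne_zero, filter_boxPartitions_succ_eq_zero, boxSeries]
  congr 1
  refine sum_congr rfl fun f hf => ?_
  rw [sum_range_succ, (mem_boxPartitions.mp hf).2.2 s le_rfl, add_zero]

lemma boxSeries_mul_boxSeries (s t s' t' : ℕ) :
    boxSeries R s t * boxSeries R s' t' = ∑ p ∈ boxPartitions s t ×ˢ boxPartitions s' t',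
      X ^ (∑ j ∈ range s, p.1 j + ∑ j ∈ range s', p.2 j) := by
  simp only [boxSeries, sum_mul_sum, sum_product, pow_add]

end BoxSeries

section QPochhammer

variable {R : Type*} [CommRing R]

def qPoch (R : Type*) [CommRing R] (m s : ℕ) : R⟦X⟧ :=
  ∏ j ∈ range s, (1 - X ^ (m + j + 1))

lemma qPoch_zero (m : ℕ) : qPoch R m 0 = 1 := prod_range_zero _

lemma qPoch_succ (m s : ℕ) : qPoch R m (s + 1) = qPoch R m s * (1 - X ^ (m + s + 1)) :=
  prod_range_succ _ s

lemma qPoch_succ' (m s : ℕ) : qPoch R m (s + 1) = (1 - X ^ (m + 1)) * qPoch R (m + 1) s := by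
  rw [qPoch, prod_range_succ', mul_comm, add_zero, qPoch]
  congr 1
  exact prod_congr rfl fun j _ => by ring_nf

lemma prod_Icc_one_sub_X_pow (m s : ℕ) :
    ∏ j ∈ Icc 1 s, (1 - X ^ (j + m) : R⟦X⟧) = qPoch R m s := by
  rw [← Ico_add_one_right_eq_Icc, prod_Ico_eq_prod_range, add_tsub_cancel_right, qPoch]
  exact prod_congr rfl fun j _ => by ring_nf

lemma isUnit_one_sub_X_pow {n : ℕ} (hn : n ≠ 0) : IsUnit (1 - X ^ n : R⟦X⟧) := by
  rw [isUnit_iff_constantCoeff]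
  simp [zero_pow hn]

lemma boxSeries_mul_qPoch (s t : ℕ) : boxSeries R s t * qPoch R 0 s = qPoch R t s := by
  induction s generalizing t with
  | zero => rw [boxSeries_eq_one_of_zero R (.inl rfl), qPoch_zero, qPoch_zero, one_mul]
  | succ s ihs =>
    induction t with
    | zero => rw [boxSeries_eq_one_of_zero R (.inr rfl), one_mul]
    | succ t iht =>
      rw [qPoch_succ, qPoch_succ' t] at iht
      rw [boxSeries_succ_succ, qPoch_succ, qPoch_succ]
      linear_combination (1 - X ^ (0 + s + 1)) * ihs (t + 1) + X ^ (s + 1) * iht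

end QPochhammer

open Classical in
def twoRowPlanePartitions (s t : ℕ) : Finset ((ℕ → ℕ) × (ℕ → ℕ)) :=
  (boxPartitions s t ×ˢ boxPartitions s t).filter fun p => p.2 ≤ p.1

lemma mem_twoRowPlanePartitions {s t : ℕ} {p : (ℕ → ℕ) × (ℕ → ℕ)} :
    p ∈ twoRowPlanePartitions s t ↔ IsBox s t p.1 ∧ IsBox s t p.2 ∧ p.2 ≤ p.1 := by
  classical
  simp [twoRowPlanePartitions, mem_boxPartitions, and_assoc]

def reflect (p : (ℕ → ℕ) × (ℕ → ℕ)) : (ℕ → ℕ) × (ℕ → ℕ) :=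
  (splice (sInf {i | p.1 i < p.2 i} + 1) (p.2 · - 1) (fun i => p.1 (i - 1)),
    splice (sInf {i | p.1 i < p.2 i}) (p.1 · + 1) (fun i => p.2 (i + 1)))

def unreflect (p : (ℕ → ℕ) × (ℕ → ℕ)) : (ℕ → ℕ) × (ℕ → ℕ) :=
  (splice (sInf {i | p.2 i ≤ p.1 i + 1}) (p.2 · - 1) (fun i => p.1 (i + 1)),
    splice (sInf {i | p.2 i ≤ p.1 i + 1} + 1) (p.1 · + 1) (fun i => p.2 (i - 1)))

section Reflection

variable {s t k : ℕ} {u v a b : ℕ → ℕ}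

lemma reflect_eq {p : (ℕ → ℕ) × (ℕ → ℕ)} (hk : IsLeast {i | p.1 i < p.2 i} k) :
    reflect p = (splice (k + 1) (p.2 · - 1) (fun i => p.1 (i - 1)),
      splice k (p.1 · + 1) (fun i => p.2 (i + 1))) := by
  rw [reflect, hk.csInf_eq]

lemma unreflect_eq {p : (ℕ → ℕ) × (ℕ → ℕ)} (hk : IsLeast {i | p.2 i ≤ p.1 i + 1} k) :
    unreflect p = (splice k (p.2 · - 1) (fun i => p.1 (i + 1)),
      splice (k + 1) (p.1 · + 1) (fun i => p.2 (i - 1))) := by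
  rw [unreflect, hk.csInf_eq]

lemma le_of_isLeast_lt (hv : IsBox (s + 1) t v) (hk : IsLeast {i | u i < v i} k) : k ≤ s := by
  have hlt : u k < v k := hk.1
  by_contra h
  have := hv.2.2 k (by omega)
  omega

lemma isBox_reflect (hu : IsBox (s + 1) (t + 1) u) (hv : IsBox (s + 1) (t + 1) v)
    (hk : IsLeast {i | u i < v i} k) :
    IsBox (s + 2) t (reflect (u, v)).1 ∧ IsBox s (t + 2) (reflect (u, v)).2 := by
  have hlt : u k < v k := hk.1
  have hle : ∀ i < k, v i ≤ u i := fun i hi => not_lt.mp (hk.not_of_lt hi)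
  have hks := le_of_isLeast_lt hv hk
  rw [reflect_eq (p := (u, v)) hk]
  dsimp only
  constructor
  · refine isBox_splice (fun i j h => Nat.sub_le_sub_right (hv.1 h) 1)
      (fun i j h => hu.1 (Nat.sub_le_sub_right h 1)) (fun i hi => ?_)
      (fun i _ => Nat.sub_le_of_le_add (hv.2.1 i)) (fun i hi => ?_) (by omega)
      (fun i hi => hu.2.2 _ (by omega))
    · have := hv.1 (Nat.lt_succ_iff.mp hi); simp only [add_tsub_cancel_right]; omega
    · have := hu.1 (show k ≤ i - 1 by omega); have := hv.2.1 k; omega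
  · refine isBox_splice (fun i j h => Nat.add_le_add_right (hu.1 h) 1)
      (fun i j h => hv.1 (Nat.add_le_add_right h 1)) (fun i hi => ?_)
      (fun i _ => by have := hu.2.1 i; omega) (fun i _ => by have := hv.2.1 (i + 1); omega)
      hks (fun i hi => hv.2.2 _ (by omega))
    · have := hv.1 (show i ≤ k + 1 by omega); have := hle i hi; omega

lemma isBox_unreflect (ha : IsBox (s + 2) t a) (hb : IsBox s (t + 2) b)
    (hk : IsLeast {i | b i ≤ a i + 1} k) :
    IsBox (s + 1) (t + 1) (unreflect (a, b)).1 ∧ IsBox (s + 1) (t + 1) (unreflect (a, b)).2 := by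
  have hle : b k ≤ a k + 1 := hk.1
  have hlt : ∀ i < k, a i + 1 < b i := fun i hi => not_le.mp (hk.not_of_lt hi)
  have hks : k ≤ s := hk.2 (show b s ≤ a s + 1 by rw [hb.2.2 s le_rfl]; omega)
  rw [unreflect_eq (p := (a, b)) hk]
  dsimp only
  constructor
  · refine isBox_splice (fun i j h => Nat.sub_le_sub_right (hb.1 h) 1)
      (fun i j h => ha.1 (Nat.add_le_add_right h 1)) (fun i hi => ?_)
      (fun i _ => by have := hb.2.1 i; omega) (fun i _ => by have := ha.2.1 (i + 1); omega)
      (by omega) (fun i hi => ha.2.2 _ (by omega))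
    · have := ha.1 (show i ≤ k + 1 by omega); have := hlt i hi; omega
  · refine isBox_splice (fun i j h => Nat.add_le_add_right (ha.1 h) 1)
      (fun i j h => hb.1 (Nat.sub_le_sub_right h 1)) (fun i hi => ?_)
      (fun i _ => by have := ha.2.1 i; omega) (fun i hi => ?_) (by omega)
      (fun i hi => hb.2.2 _ (by omega))
    · have := ha.1 (Nat.lt_succ_iff.mp hi); simp only [add_tsub_cancel_right]; omega
    · have := hb.1 (show k ≤ i - 1 by omega); have := ha.2.1 k; omega

lemma isLeast_reflect (hv : Antitone v) (hk : IsLeast {i | u i < v i} k) :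
    IsLeast {i | (reflect (u, v)).2 i ≤ (reflect (u, v)).1 i + 1} k := by
  have hle : ∀ i < k, v i ≤ u i := fun i hi => not_lt.mp (hk.not_of_lt hi)
  have hlt : u k < v k := hk.1
  rw [reflect_eq (p := (u, v)) hk]
  dsimp only
  refine ⟨?_, fun i hi => not_lt.mp fun hik => ?_⟩
  · have : v (k + 1) ≤ v k := hv (by omega)
    simp only [Set.mem_ofPred_eq, splice, lt_irrefl, if_false, Nat.lt_succ_self, if_true]
    omega
  · have := hle i hik
    have := hv hik.le
    simp only [Set.mem_ofPred_eq, splice, hik, if_true, Nat.lt_succ_of_lt hik] at hi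
    omega

lemma isLeast_unreflect (ha : Antitone a) (hk : IsLeast {i | b i ≤ a i + 1} k) :
    IsLeast {i | (unreflect (a, b)).1 i < (unreflect (a, b)).2 i} k := by
  have hlt : ∀ i < k, a i + 1 < b i := fun i hi => not_le.mp (hk.not_of_lt hi)
  rw [unreflect_eq (p := (a, b)) hk]
  dsimp only
  refine ⟨?_, fun i hi => not_lt.mp fun hik => ?_⟩
  · have : a (k + 1) ≤ a k := ha (by omega)
    simp only [Set.mem_ofPred_eq, splice, lt_irrefl, if_false, Nat.lt_succ_self, if_true]
    omega
  · have := hlt i hik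
    simp only [Set.mem_ofPred_eq, splice, hik, if_true, Nat.lt_succ_of_lt hik] at hi
    omega

lemma unreflect_reflect (hv : Antitone v) (hk : IsLeast {i | u i < v i} k) :
    unreflect (reflect (u, v)) = (u, v) := by
  have hlt : u k < v k := hk.1
  have hpos : ∀ i ≤ k, 1 ≤ v i := fun i hi => (by omega : 1 ≤ v k).trans (hv hi)
  rw [unreflect_eq (isLeast_reflect hv hk), reflect_eq (p := (u, v)) hk]
  dsimp only
  ext i
  · simp only [splice]
    split_ifs <;> first | omega | simp
  · simp only [splice]
    split_ifs <;> first | omega | (have := hpos i (by omega); omega) | (congr 1; omega)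

lemma reflect_unreflect (ha : Antitone a) (hk : IsLeast {i | b i ≤ a i + 1} k) :
    reflect (unreflect (a, b)) = (a, b) := by
  have hlt : ∀ i < k, a i + 1 < b i := fun i hi => not_le.mp (hk.not_of_lt hi)
  rw [reflect_eq (isLeast_unreflect ha hk), unreflect_eq (p := (a, b)) hk]
  dsimp only
  ext i
  · simp only [splice]
    split_ifs <;> first | omega | simp | (congr 1; omega)
  · simp only [splice]
    split_ifs <;> first | omega | (have := hlt i (by omega); omega) | simp

lemma sum_reflect (hv : IsBox (s + 1) (t + 1) v) (hk : IsLeast {i | u i < v i} k) :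
    ∑ j ∈ range (s + 2), (reflect (u, v)).1 j + ∑ j ∈ range s, (reflect (u, v)).2 j + 1 =
      ∑ j ∈ range (s + 1), u j + ∑ j ∈ range (s + 1), v j := by
  have hlt : u k < v k := hk.1
  have hks := le_of_isLeast_lt hv hk
  have hpos : ∀ i ∈ range (k + 1), 1 ≤ v i := fun i hi =>
    (by omega : 1 ≤ v k).trans (hv.1 (mem_range_succ_iff.mp hi))
  rw [reflect_eq (p := (u, v)) hk]
  dsimp only
  rw [sum_range_splice (by omega), sum_range_splice hks,
    ← sum_range_add_sum_Ico u (by omega : k ≤ s + 1),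
    ← sum_range_add_sum_Ico v (by omega : k + 1 ≤ s + 1)]
  have hu_tail : ∑ i ∈ Ico (k + 1) (s + 2), u (i - 1) = ∑ i ∈ Ico k (s + 1), u i := by
    rw [← sum_Ico_add' (fun i => u (i - 1))]; simp
  have hv_tail : ∑ i ∈ Ico k s, v (i + 1) = ∑ i ∈ Ico (k + 1) (s + 1), v i :=
    sum_Ico_add' v k s 1
  have hv_head := sum_sub_one_add_card hpos
  have hu_head : ∑ i ∈ range k, (u i + 1) = ∑ i ∈ range k, u i + k := by
    simp [sum_add_distrib]
  rw [card_range] at hv_head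
  omega

end Reflection

def twoRowSeries (R : Type*) [CommSemiring R] (s t : ℕ) : R⟦X⟧ :=
  ∑ p ∈ twoRowPlanePartitions s t, X ^ (∑ j ∈ range s, p.1 j + ∑ j ∈ range s, p.2 j)

lemma twoRowSeries_eq_one_of_zero (R : Type*) [CommSemiring R] {s t : ℕ} (h : s = 0 ∨ t = 0) :
    twoRowSeries R s t = 1 := by
  classical
  simp [twoRowSeries, twoRowPlanePartitions, boxPartitions_eq_zero_of_zero h, filter_singleton]

lemma boxSeries_sq (R : Type*) [CommSemiring R] (s t : ℕ) :
    boxSeries R (s + 1) (t + 1) ^ 2 =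
      twoRowSeries R (s + 1) (t + 1) + X * (boxSeries R (s + 2) t * boxSeries R s (t + 2)) := by
  classical
  rw [sq, boxSeries_mul_boxSeries, ← sum_filter_add_sum_filter_not _ (fun p => p.2 ≤ p.1),
    boxSeries_mul_boxSeries, mul_sum]
  congr 1
  refine sum_nbij' reflect unreflect ?_ ?_ ?_ ?_ ?_
  · rintro ⟨u, v⟩ hp
    simp only [mem_filter, mem_product, mem_boxPartitions, Pi.le_def, not_forall, not_le] at hp ⊢
    exact isBox_reflect hp.1.1 hp.1.2 (isLeast_csInf hp.2)
  · rintro ⟨a, b⟩ hq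
    simp only [mem_filter, mem_product, mem_boxPartitions, Pi.le_def, not_forall, not_le] at hq ⊢
    have hk := isLeast_csInf (s := {i | b i ≤ a i + 1}) ⟨s, by simp [hq.2.2.2 s le_rfl]⟩
    exact ⟨isBox_unreflect hq.1 hq.2 hk, _, (isLeast_unreflect hq.1.1 hk).1⟩
  · rintro ⟨u, v⟩ hp
    simp only [mem_filter, mem_product, mem_boxPartitions, Pi.le_def, not_forall, not_le] at hp
    exact unreflect_reflect hp.1.2.1 (isLeast_csInf hp.2)
  · rintro ⟨a, b⟩ hq
    simp only [mem_product, mem_boxPartitions] at hq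
    exact reflect_unreflect hq.1.1 (isLeast_csInf ⟨s, by simp [hq.2.2.2 s le_rfl]⟩)
  · rintro ⟨u, v⟩ hp
    simp only [mem_filter, mem_product, mem_boxPartitions, Pi.le_def, not_forall, not_le] at hp
    rw [← pow_succ', ← sum_reflect hp.1.2 (isLeast_csInf hp.2)]

section TwoRowProduct

variable (R : Type*) [CommRing R]

lemma twoRowSeries_succ_succ (s t : ℕ) :
    twoRowSeries R (s + 1) (t + 1) =
      boxSeries R (s + 1) (t + 1) ^ 2 - X * (boxSeries R (s + 2) t * boxSeries R s (t + 2)) := by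
  rw [boxSeries_sq]; ring

lemma twoRowSeries_succ_succ_mul_qPoch (s t : ℕ) :
    twoRowSeries R (s + 1) (t + 1) * qPoch R 0 (s + 1) * qPoch R 1 (s + 1) =
      qPoch R (t + 1) (s + 1) * qPoch R (t + 2) (s + 1) := by
  have hB := boxSeries_mul_qPoch (R := R) (s + 1) (t + 1)
  have hB₁ : boxSeries R (s + 2) t * qPoch R 0 (s + 2) =
      (1 - X ^ (t + 1)) * qPoch R (t + 1) (s + 1) := by
    rw [boxSeries_mul_qPoch, qPoch_succ']
  have hB₂ : boxSeries R s (t + 2) * qPoch R 0 s * (1 - X ^ (t + 2)) =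
      qPoch R (t + 1) (s + 1) := by
    rw [boxSeries_mul_qPoch, qPoch_succ' (t + 1), mul_comm]
  have hN : (1 - X ^ (t + 2)) * qPoch R (t + 2) (s + 1) =
      qPoch R (t + 1) (s + 1) * (1 - X ^ (t + s + 3)) := by
    rw [← qPoch_succ', qPoch_succ]; ring
  have hQ : qPoch R 0 (s + 1) = qPoch R 0 s * (1 - X ^ (s + 1)) := by rw [qPoch_succ, zero_add]
  have hQ₀ : qPoch R 0 (s + 2) = qPoch R 0 (s + 1) * (1 - X ^ (s + 2)) := by
    rw [qPoch_succ, zero_add]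
  have hQ₁ : qPoch R 0 (s + 2) = (1 - X) * qPoch R 1 (s + 1) := by
    rw [qPoch_succ', zero_add, pow_one]
  set N := qPoch R (t + 1) (s + 1)
  have hu : IsUnit ((1 - X) * (1 - X ^ (t + 2)) : R⟦X⟧) :=
    (pow_one (X : R⟦X⟧) ▸ isUnit_one_sub_X_pow one_ne_zero).mul (isUnit_one_sub_X_pow (by omega))
  rw [← hu.mul_left_inj]
  calc twoRowSeries R (s + 1) (t + 1) * qPoch R 0 (s + 1) * qPoch R 1 (s + 1)
        * ((1 - X) * (1 - X ^ (t + 2)))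
      = twoRowSeries R (s + 1) (t + 1) * qPoch R 0 (s + 1) * qPoch R 0 (s + 2)
          * (1 - X ^ (t + 2)) := by rw [hQ₁]; ring
    _ = (boxSeries R (s + 1) (t + 1) * qPoch R 0 (s + 1)) ^ 2 * (1 - X ^ (s + 2))
            * (1 - X ^ (t + 2))
          - X * (boxSeries R (s + 2) t * qPoch R 0 (s + 2))
            * (boxSeries R s (t + 2) * qPoch R 0 s * (1 - X ^ (t + 2))) * (1 - X ^ (s + 1)) := by
        rw [twoRowSeries_succ_succ, hQ₀, hQ]; ring
    _ = N * N * (1 - X) * (1 - X ^ (t + s + 3)) := by rw [hB, hB₁, hB₂]; ring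
    _ = N * qPoch R (t + 2) (s + 1) * ((1 - X) * (1 - X ^ (t + 2))) := by
        linear_combination (-(N * (1 - X))) * hN

lemma twoRowSeries_mul_qPoch (s t : ℕ) :
    twoRowSeries R s t * qPoch R 0 s * qPoch R 1 s = qPoch R t s * qPoch R (t + 1) s := by
  rcases s with _ | s
  · simp [twoRowSeries_eq_one_of_zero R (.inl rfl), qPoch_zero]
  rcases t with _ | t
  · rw [twoRowSeries_eq_one_of_zero R (.inr rfl), one_mul]
  exact twoRowSeries_succ_succ_mul_qPoch R s t

end TwoRowProduct

lemma boxedPlanePartitionCount_eq_card (s t k : ℕ) :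
    boxedPlanePartitionCount s t k = #{p ∈ twoRowPlanePartitions s t |
      ∑ j ∈ range s, p.1 j + ∑ j ∈ range s, p.2 j = k} := by
  classical
  rw [← Nat.card_eq_finsetCard, boxedPlanePartitionCount]
  refine Nat.card_congr
    { toFun := fun f => ⟨(extendByZero (f.1 0), extendByZero (f.1 1)), ?_⟩
      invFun := fun p => ⟨![fun j => p.1.1 j, fun j => p.1.2 j], ?_⟩
      left_inv := fun f => ?_
      right_inv := fun p => ?_ }
  · obtain ⟨f, hanti, hdom, hle, hsum⟩ := f
    rw [mem_filter, mem_twoRowPlanePartitions, sum_range_extendByZero, sum_range_extendByZero]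
    exact ⟨⟨isBox_extendByZero (hanti 0) (hle 0), isBox_extendByZero (hanti 1) (hle 1),
      extendByZero_mono hdom⟩, by simpa [Fin.sum_univ_two] using hsum⟩
  · obtain ⟨⟨u, v⟩, hp⟩ := p
    rw [mem_filter, mem_twoRowPlanePartitions] at hp
    obtain ⟨⟨hu, hv, hvu⟩, hsum⟩ := hp
    refine ⟨Fin.forall_fin_two.mpr ⟨fun i j h => hu.1 h, fun i j h => hv.1 h⟩, fun j => hvu j,
      Fin.forall_fin_two.mpr ⟨fun j => hu.2.1 j, fun j => hv.2.1 j⟩, ?_⟩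
    simpa [Fin.sum_univ_two, Fin.sum_univ_eq_sum_range (fun j => u j),
      Fin.sum_univ_eq_sum_range (fun j => v j)] using hsum
  · ext i j
    fin_cases i <;> simp [extendByZero_val]
  · obtain ⟨⟨u, v⟩, hp⟩ := p
    rw [mem_filter, mem_twoRowPlanePartitions] at hp
    obtain ⟨⟨hu, hv, -⟩, -⟩ := hp
    ext1
    simp only [Matrix.cons_val_zero, Matrix.cons_val_one]
    exact Prod.ext (extendByZero_restrict hu.2.2) (extendByZero_restrict hv.2.2)

lemma mk_boxedPlanePartitionCount (R : Type*) [CommSemiring R] (s t : ℕ) :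
    PowerSeries.mk (fun k => (boxedPlanePartitionCount s t k : R)) = twoRowSeries R s t := by
  ext k
  simp only [coeff_mk, twoRowSeries, map_sum, coeff_X_pow, boxedPlanePartitionCount_eq_card]
  rw [sum_boole]
  simp [eq_comm]

end

/-- MacMahon's box formula for `r = 2`. -/
theorem macMahon_box_two_rows (s t : ℕ) :
    (PowerSeries.mk fun k => (boxedPlanePartitionCount s t k : ℚ)) *
        (∏ j ∈ Finset.Icc 1 s, ((1 - X ^ j) * (1 - X ^ (j + 1)))) =
      ∏ j ∈ Finset.Icc 1 s, ((1 - X ^ (j + t)) * (1 - X ^ (j + t + 1))) := by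
  have h := twoRowSeries_mul_qPoch ℚ s t
  rw [← prod_Icc_one_sub_X_pow, ← prod_Icc_one_sub_X_pow, ← prod_Icc_one_sub_X_pow,
    ← prod_Icc_one_sub_X_pow] at h
  rw [mk_boxedPlanePartitionCount, prod_mul_distrib, prod_mul_distrib, ← mul_assoc]
  simpa [add_assoc] using h
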